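/- Let (L, R, α, β) be a regular pairing. Then the idempotent ℓr: LR → LR is a morphism of non-counital comonads (LR, LηR) → (LR, LηR) respecting the quasi-counit ε, i.e., LηR·ℓr = ℓrℓr·LηR and ε·ℓr = ε. -/

import Mathlib

/-!
Regularity of the pairing says `α f ≫ r = α f` and `ℓ ≫ β g = β g`, since `α (β g) = g ≫ r` and
`β (α f) = ℓ ≫ f`. As `ℓr = β (α (L r))`, regularity gives `α (ℓr) = α (L r) = r ≫ η`; together
with the naturality of `ℓ` this yields compatibility with the coproduct `LηR`. Compatibility with
`ε` comes from `ℓ ≫ ε = ε` (regularity of `β` at the identity) and `L r ≫ ε = β (α ε) = ℓ ≫ ε`.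
-/

open CategoryTheory

universe v₁ u₁ v₂ u₂

section

variable {A : Type u₁} [Category.{v₁} A] {B : Type u₂} [Category.{v₂} B]
variable (L : A ⥤ B) (R : B ⥤ A)

def pairingAlpha (η : 𝟭 A ⟶ L ⋙ R) {X : A} {Y : B} (f : L.obj X ⟶ Y) : X ⟶ R.obj Y :=
  η.app X ≫ R.map f

def pairingBeta (ε : R ⋙ L ⟶ 𝟭 B) {X : A} {Y : B} (g : X ⟶ R.obj Y) : L.obj X ⟶ Y :=
  L.map g ≫ ε.app Y

def pairingEll (η : 𝟭 A ⟶ L ⋙ R) (ε : R ⋙ L ⟶ 𝟭 B) (X : A) : L.obj X ⟶ L.obj X :=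
  L.map (η.app X) ≫ ε.app (L.obj X)

def pairingR (η : 𝟭 A ⟶ L ⋙ R) (ε : R ⋙ L ⟶ 𝟭 B) (Y : B) : R.obj Y ⟶ R.obj Y :=
  η.app (R.obj Y) ≫ R.map (ε.app Y)

/-- `ℓr : LR ⟶ LR` (componentwise). -/
def ellR (η : 𝟭 A ⟶ L ⋙ R) (ε : R ⋙ L ⟶ 𝟭 B) (Y : B) :
    L.obj (R.obj Y) ⟶ L.obj (R.obj Y) :=
  L.map (pairingR L R η ε Y) ≫ pairingEll L R η ε (R.obj Y)

section Regular

variable {L R}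

lemma pairingAlpha_map_comp (η : 𝟭 A ⟶ L ⋙ R) {X X' : A} {Y : B} (h : X ⟶ X')
    (f : L.obj X' ⟶ Y) :
    pairingAlpha L R η (L.map h ≫ f) = h ≫ pairingAlpha L R η f := by
  simpa [pairingAlpha] using (η.naturality_assoc h (R.map f)).symm

lemma pairingAlpha_map (η : 𝟭 A ⟶ L ⋙ R) {X X' : A} (h : X ⟶ X') :
    pairingAlpha L R η (L.map h) = h ≫ η.app X' := by
  simpa [pairingAlpha] using (η.naturality h).symm

lemma pairingBeta_comp_map (ε : R ⋙ L ⟶ 𝟭 B) {X : A} {Y Y' : B} (g : X ⟶ R.obj Y)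
    (h : Y ⟶ Y') :
    pairingBeta L R ε (g ≫ R.map h) = pairingBeta L R ε g ≫ h := by
  simpa [pairingBeta] using congrArg (L.map g ≫ ·) (ε.naturality h)

variable (η : 𝟭 A ⟶ L ⋙ R) (ε : R ⋙ L ⟶ 𝟭 B)

lemma pairingAlpha_pairingBeta {X : A} {Y : B} (g : X ⟶ R.obj Y) :
    pairingAlpha L R η (pairingBeta L R ε g) = g ≫ pairingR L R η ε Y :=
  pairingAlpha_map_comp η g (ε.app Y)

lemma pairingBeta_pairingAlpha {X : A} {Y : B} (f : L.obj X ⟶ Y) :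
    pairingBeta L R ε (pairingAlpha L R η f) = pairingEll L R η ε X ≫ f :=
  pairingBeta_comp_map ε (η.app X) f

lemma pairingEll_naturality {X X' : A} (h : X ⟶ X') :
    L.map h ≫ pairingEll L R η ε X' = pairingEll L R η ε X ≫ L.map h := by
  rw [← pairingBeta_pairingAlpha, pairingAlpha_map]
  simp [pairingEll, pairingBeta]

lemma ellR_eq_pairingEll_comp (Y : B) :
    ellR L R η ε Y = pairingEll L R η ε (R.obj Y) ≫ L.map (pairingR L R η ε Y) :=
  pairingEll_naturality η ε _

lemma pairingAlpha_comp_pairingR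
    (regα : ∀ (X : A) (Y : B) (f : L.obj X ⟶ Y),
      pairingAlpha L R η (pairingBeta L R ε (pairingAlpha L R η f)) = pairingAlpha L R η f)
    {X : A} {Y : B} (f : L.obj X ⟶ Y) :
    pairingAlpha L R η f ≫ pairingR L R η ε Y = pairingAlpha L R η f := by
  rw [← pairingAlpha_pairingBeta, regα]

lemma pairingEll_comp_pairingBeta
    (regβ : ∀ (X : A) (Y : B) (g : X ⟶ R.obj Y),
      pairingBeta L R ε (pairingAlpha L R η (pairingBeta L R ε g)) = pairingBeta L R ε g)
    {X : A} {Y : B} (g : X ⟶ R.obj Y) :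
    pairingEll L R η ε X ≫ pairingBeta L R ε g = pairingBeta L R ε g := by
  rw [← pairingBeta_pairingAlpha, regβ]

lemma ellR_comp_map_unit
    (regα : ∀ (X : A) (Y : B) (f : L.obj X ⟶ Y),
      pairingAlpha L R η (pairingBeta L R ε (pairingAlpha L R η f)) = pairingAlpha L R η f)
    (Y : B) :
    ellR L R η ε Y ≫ L.map (η.app (R.obj Y))
      = L.map (η.app (R.obj Y)) ≫ L.map (R.map (ellR L R η ε Y)) ≫
          ellR L R η ε (L.obj (R.obj Y)) := by
  set ℓ := pairingEll L R η ε (R.obj Y)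
  set r := pairingR L R η ε Y
  have alpha_ellR : pairingAlpha L R η (ellR L R η ε Y) = pairingAlpha L R η (L.map r) := by
    rw [ellR_eq_pairingEll_comp, ← pairingBeta_pairingAlpha, regα]
  calc ellR L R η ε Y ≫ L.map (η.app (R.obj Y))
      = ℓ ≫ L.map (pairingAlpha L R η (L.map r)) := by
        rw [ellR_eq_pairingEll_comp, pairingAlpha_map, Functor.map_comp, Category.assoc]
    _ = L.map (pairingAlpha L R η (ellR L R η ε Y)) ≫ pairingEll L R η ε _ := by
        rw [alpha_ellR, pairingEll_naturality]
    _ = L.map (pairingAlpha L R η (ellR L R η ε Y) ≫ pairingR L R η ε _) ≫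
          pairingEll L R η ε _ := by
        rw [pairingAlpha_comp_pairingR η ε regα]
    _ = _ := by simp [pairingAlpha, ellR]

lemma ellR_comp_counit
    (regβ : ∀ (X : A) (Y : B) (g : X ⟶ R.obj Y),
      pairingBeta L R ε (pairingAlpha L R η (pairingBeta L R ε g)) = pairingBeta L R ε g)
    (Y : B) :
    ellR L R η ε Y ≫ ε.app Y = ε.app Y := by
  have ell_counit : pairingEll L R η ε (R.obj Y) ≫ ε.app Y = ε.app Y := by
    simpa [pairingBeta] using pairingEll_comp_pairingBeta η ε regβ (𝟙 (R.obj Y))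
  calc ellR L R η ε Y ≫ ε.app Y
      = pairingBeta L R ε (pairingAlpha L R η (ε.app Y)) := by
        rw [ellR, Category.assoc, ell_counit]; rfl
    _ = ε.app Y := by rw [pairingBeta_pairingAlpha, ell_counit]

end Regular

/-- For a regular pairing, the idempotent `ℓr : LR ⟶ LR` is a
morphism of non-counital comonads `(LR, LηR) → (LR, LηR)` respecting the
quasi-counit `ε`: `LηR·ℓr = ℓrℓr·LηR` and `ε·ℓr = ε`. -/
theorem regular_pairing_ellR_comonad_morphism
    (η : 𝟭 A ⟶ L ⋙ R) (ε : R ⋙ L ⟶ 𝟭 B)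
    (regα : ∀ (X : A) (Y : B) (f : L.obj X ⟶ Y),
      pairingAlpha L R η (pairingBeta L R ε (pairingAlpha L R η f)) = pairingAlpha L R η f)
    (regβ : ∀ (X : A) (Y : B) (g : X ⟶ R.obj Y),
      pairingBeta L R ε (pairingAlpha L R η (pairingBeta L R ε g)) = pairingBeta L R ε g) :
    (∀ Y : B, ellR L R η ε Y ≫ L.map (η.app (R.obj Y))
        = L.map (η.app (R.obj Y)) ≫ L.map (R.map (ellR L R η ε Y)) ≫
            ellR L R η ε (L.obj (R.obj Y))) ∧
    (∀ Y : B, ellR L R η ε Y ≫ ε.app Y = ε.app Y) :=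
  ⟨ellR_comp_map_unit η ε regα, ellR_comp_counit η ε regβ⟩

end
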